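/- arXiv:2207.04899 — 3 statements merged into one kernel-verified Lean document; each statement's English description precedes it below -/
import Mathlib

section
/- For every real number r with -1 ≤ r ≤ 1, the first cosine Fourier coefficient of the rectified shifted cosine satisfies (1/π) · ∫_{-π}^{π} max(0, cos t + r) · cos t dt = (1/π)(r·√(1-r²) - arccos r) + 1. -/
/-!
Put `a = arccos (-r) ∈ [0, π]`, so that `cos t + r = cos t - cos a`. On `[-π, π]` this is
nonnegative exactly on `[-a, a]`, because `cos` is even and decreasing on `[0, π]`. Hence the
integral is `∫_{-a}^{a} (cos t - cos a) cos t dt = a - sin a cos a`, and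
`a = π - arccos r`, `sin a = √(1 - r²)`, `cos a = -r`.
-/

open Real intervalIntegral

namespace Real

variable {a t : ℝ}

lemma cos_le_cos_of_abs_le (ha : a ≤ π) (h : |t| ≤ a) : cos a ≤ cos t :=
  cos_abs t ▸ cos_le_cos_of_nonneg_of_le_pi (abs_nonneg t) ha h

lemma cos_le_cos_of_le_abs (ha : 0 ≤ a) (ht : |t| ≤ π) (h : a ≤ |t|) : cos t ≤ cos a :=
  cos_abs t ▸ cos_le_cos_of_nonneg_of_le_pi ha ht h

lemma integral_max_zero_cos_sub_cos_mul_cos (ha₀ : 0 ≤ a) (haπ : a ≤ π) :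
    ∫ t in (-π)..π, max 0 (cos t - cos a) * cos t = a - sin a * cos a := by
  have hint (b c : ℝ) :
      IntervalIntegrable (fun t ↦ max 0 (cos t - cos a) * cos t) MeasureTheory.volume b c :=
    Continuous.intervalIntegrable (by fun_prop) b c
  have outer {b c : ℝ} (hbc : b ≤ c) (hout : ∀ t ∈ Set.Icc b c, a ≤ |t| ∧ |t| ≤ π) :
      ∫ t in b..c, max 0 (cos t - cos a) * cos t = 0 := by
    refine (integral_congr fun t ht ↦ ?_).trans integral_zero
    rw [Set.uIcc_of_le hbc] at ht
    obtain ⟨hat, htπ⟩ := hout t ht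
    simp [max_eq_left (sub_nonpos.2 (cos_le_cos_of_le_abs ha₀ htπ hat))]
  have inner : ∫ t in (-a)..a, max 0 (cos t - cos a) * cos t =
      ∫ t in (-a)..a, (cos t ^ 2 - cos a * cos t) := by
    refine integral_congr fun t ht ↦ ?_
    rw [Set.uIcc_of_le (by linarith)] at ht
    rw [max_eq_right (sub_nonneg.2 (cos_le_cos_of_abs_le haπ (abs_le.2 ht)))]
    ring
  rw [← integral_add_adjacent_intervals (hint _ _) (hint (-a) π),
    ← integral_add_adjacent_intervals (hint _ _) (hint a π),
    outer (by linarith) fun t ht ↦ ?_, outer haπ fun t ht ↦ ?_, inner,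
    integral_sub (Continuous.intervalIntegrable (by fun_prop) _ _)
      (Continuous.intervalIntegrable (by fun_prop) _ _),
    integral_const_mul, integral_cos_sq, integral_cos]
  · simp only [cos_neg, sin_neg]
    ring
  all_goals
    obtain ⟨htb, htc⟩ := ht
    constructor <;> cases abs_cases t <;> linarith

end Real

/-- Describing-function gain of the rectifier: the first cosine Fourier
coefficient of `t ↦ max 0 (cos t + r)` equals
`(1/π)·(r·√(1-r²) - arccos r) + 1` for `-1 ≤ r ≤ 1`. -/
theorem fourier_cos_coeff_rectified_shifted_cos (r : ℝ)
    (hr : -1 ≤ r) (hr' : r ≤ 1) :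
    (1 / π) * ∫ t in (-π)..π, max 0 (Real.cos t + r) * Real.cos t =
      (1 / π) * (r * Real.sqrt (1 - r ^ 2) - Real.arccos r) + 1 := by
  have hcos : cos (arccos (-r)) = -r := cos_arccos (by linarith) (by linarith)
  have hsin : sin (arccos (-r)) = √(1 - r ^ 2) := by rw [sin_arccos, neg_sq]
  have hshift (t : ℝ) : cos t + r = cos t - cos (arccos (-r)) := by rw [hcos, sub_neg_eq_add]
  simp_rw [hshift]
  rw [integral_max_zero_cos_sub_cos_mul_cos (arccos_nonneg _) (arccos_le_pi _), hsin, hcos,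
    arccos_neg]
  field_simp
  ring
end

section
/- For every real number r with -1 ≤ r ≤ 1, the mean value of the rectified shifted cosine over one period satisfies (1/(2π)) · ∫_{-π}^{π} max(0, cos t + r) dt = (1/π)(√(1-r²) - r·arccos r) + r. -/
open Real intervalIntegral

/-- Describing-function bias of the rectifier: the mean value of
`t ↦ max 0 (cos t + r)` over one period equals
`(1/π)·(√(1-r²) - r·arccos r) + r` for `-1 ≤ r ≤ 1`. -/
theorem mean_value_rectified_shifted_cos (r : ℝ)
    (hr : -1 ≤ r) (hr' : r ≤ 1) :
    (1 / (2 * π)) * ∫ t in (-π)..π, max 0 (Real.cos t + r) =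
      (1 / π) * (Real.sqrt (1 - r ^ 2) - r * Real.arccos r) + r := by
  set a := Real.arccos (-r) with ha
  have hra : -1 ≤ -r := by linarith
  have hra' : -r ≤ 1 := by linarith
  have hcos_a : Real.cos a = -r := Real.cos_arccos hra hra'
  have ha0 : 0 ≤ a := Real.arccos_nonneg _
  have haπ : a ≤ π := Real.arccos_le_pi _
  have hcont : Continuous fun t : ℝ => max 0 (Real.cos t + r) := by
    exact continuous_const.max (Real.continuous_cos.add continuous_const)
  have hI : ∀ x y : ℝ, IntervalIntegrable (fun t => max 0 (Real.cos t + r))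
      MeasureTheory.volume x y := fun x y => hcont.intervalIntegrable x y
  have hzero : ∀ t ∈ Set.uIcc a π, max 0 (Real.cos t + r) = 0 := by
    intro t ht
    rw [Set.uIcc_of_le haπ] at ht
    have : Real.cos t ≤ Real.cos a := by
      apply Real.cos_le_cos_of_nonneg_of_le_pi ha0 ht.2 ht.1
    rw [hcos_a] at this
    exact max_eq_left (by linarith)
  have hzero' : ∀ t ∈ Set.uIcc (-π) (-a), max 0 (Real.cos t + r) = 0 := by
    intro t ht
    rw [Set.uIcc_of_le (by linarith)] at ht
    have h1 : a ≤ -t := by linarith [ht.2]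
    have h2 : -t ≤ π := by linarith [ht.1]
    have : Real.cos (-t) ≤ Real.cos a :=
      Real.cos_le_cos_of_nonneg_of_le_pi ha0 h2 h1
    rw [hcos_a, Real.cos_neg] at this
    exact max_eq_left (by linarith)
  have hmid : ∀ t ∈ Set.uIcc (-a) a, max 0 (Real.cos t + r) = Real.cos t + r := by
    intro t ht
    rw [Set.uIcc_of_le (by linarith)] at ht
    have habs : |t| ≤ a := abs_le.mpr ⟨ht.1, ht.2⟩
    have : Real.cos a ≤ Real.cos |t| :=
      Real.cos_le_cos_of_nonneg_of_le_pi (abs_nonneg t) haπ habs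
    rw [hcos_a, Real.cos_abs] at this
    exact max_eq_right (by linarith)
  have hsplit : (∫ t in (-π)..π, max 0 (Real.cos t + r)) =
      (∫ t in (-π)..(-a), max 0 (Real.cos t + r)) +
      (∫ t in (-a)..a, max 0 (Real.cos t + r)) +
      (∫ t in a..π, max 0 (Real.cos t + r)) := by
    rw [intervalIntegral.integral_add_adjacent_intervals (hI _ _) (hI _ _),
        intervalIntegral.integral_add_adjacent_intervals (hI _ _) (hI _ _)]
  have e1 : (∫ t in (-π)..(-a), max 0 (Real.cos t + r)) = 0 := by
    rw [intervalIntegral.integral_congr hzero']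
    simp
  have e3 : (∫ t in a..π, max 0 (Real.cos t + r)) = 0 := by
    rw [intervalIntegral.integral_congr hzero]
    simp
  have e2 : (∫ t in (-a)..a, max 0 (Real.cos t + r)) =
      2 * Real.sqrt (1 - r ^ 2) + 2 * r * a := by
    rw [intervalIntegral.integral_congr hmid]
    have : (∫ t in (-a)..a, (Real.cos t + r)) =
        (∫ t in (-a)..a, Real.cos t) + ∫ t in (-a)..a, (r : ℝ) := by
      rw [intervalIntegral.integral_add]
      · exact Real.continuous_cos.intervalIntegrable _ _
      · exact intervalIntegrable_const
    rw [this, integral_cos, integral_const]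
    have hsin : Real.sin a = Real.sqrt (1 - r ^ 2) := by
      rw [ha, Real.sin_arccos]
      ring_nf
    rw [Real.sin_neg, hsin, smul_eq_mul]
    ring
  have harc : a = π - Real.arccos r := Real.arccos_neg r
  have hπ : (0:ℝ) < π := Real.pi_pos
  rw [hsplit, e1, e2, e3, harc]
  field_simp
  ring
end

section
/- Define K(r) := (1/π)(r·√(1-r²) - arccos r) + 1 and L(r) := (1/π)(√(1-r²) - r·arccos r) + r. For all r, s ∈ [-1, 1] and every real w ≥ 0, if K(r) < K(s) then r + w·L(r) < s + w·L(s). -/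
/-!
On `(-1, 1)` the gain has derivative `(2/π)·√(1 - r²) ≥ 0` and the bias has derivative
`1 - arccos r / π ≥ 0`, so both are monotone on `[-1, 1]`. Hence `K r < K s` forces `r < s`,
and then `L r ≤ L s`.
-/

open Real Set

noncomputable section

namespace DescribingFunction

/-- The paper's `K`; `bias` below is its `L`. -/
def gain (r : ℝ) : ℝ := (1 / π) * (r * √(1 - r ^ 2) - arccos r) + 1

def bias (r : ℝ) : ℝ := (1 / π) * (√(1 - r ^ 2) - r * arccos r) + r

variable {x : ℝ}

lemma continuous_gain : Continuous gain := by
  unfold gain; fun_prop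

lemma continuous_bias : Continuous bias := by
  unfold bias; fun_prop

lemma hasDerivAt_sqrt_one_sub_sq (hx : 1 - x ^ 2 ≠ 0) :
    HasDerivAt (fun y ↦ √(1 - y ^ 2)) (-x / √(1 - x ^ 2)) x := by
  have h := ((hasDerivAt_pow 2 x).const_sub 1).sqrt hx
  convert h using 1
  field_simp
  ring

lemma hasDerivAt_gain (hx : x ∈ Ioo (-1 : ℝ) 1) :
    HasDerivAt gain (2 / π * √(1 - x ^ 2)) x := by
  have hsq : 0 < 1 - x ^ 2 := by nlinarith [hx.1, hx.2]
  have h : HasDerivAt gain _ x := ((((hasDerivAt_id' x).mul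
    (hasDerivAt_sqrt_one_sub_sq hsq.ne')).sub (hasDerivAt_arccos hx.1.ne' hx.2.ne)).const_mul
    (1 / π)).add_const 1
  refine h.congr_deriv ?_
  have : √(1 - x ^ 2) ≠ 0 := (sqrt_pos.2 hsq).ne'
  field_simp
  linear_combination -sq_sqrt hsq.le

lemma hasDerivAt_bias (hx : x ∈ Ioo (-1 : ℝ) 1) :
    HasDerivAt bias (1 - arccos x / π) x := by
  have hsq : 0 < 1 - x ^ 2 := by nlinarith [hx.1, hx.2]
  have h : HasDerivAt bias _ x := (((hasDerivAt_sqrt_one_sub_sq hsq.ne').sub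
    ((hasDerivAt_id' x).mul (hasDerivAt_arccos hx.1.ne' hx.2.ne))).const_mul (1 / π)).add
    (hasDerivAt_id' x)
  refine h.congr_deriv ?_
  have : √(1 - x ^ 2) ≠ 0 := (sqrt_pos.2 hsq).ne'
  field_simp
  ring

lemma monotoneOn_gain : MonotoneOn gain (Icc (-1) 1) := by
  refine monotoneOn_of_hasDerivWithinAt_nonneg (f' := fun x ↦ 2 / π * √(1 - x ^ 2))
    (convex_Icc _ _) continuous_gain.continuousOn (fun x hx ↦ ?_) (fun x _ ↦ by positivity)
  rw [interior_Icc] at hx ⊢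
  exact (hasDerivAt_gain hx).hasDerivWithinAt

lemma monotoneOn_bias : MonotoneOn bias (Icc (-1) 1) := by
  refine monotoneOn_of_hasDerivWithinAt_nonneg (f' := fun x ↦ 1 - arccos x / π)
    (convex_Icc _ _) continuous_bias.continuousOn (fun x hx ↦ ?_) (fun x _ ↦ ?_)
  · rw [interior_Icc] at hx ⊢
    exact (hasDerivAt_bias hx).hasDerivWithinAt
  · rw [sub_nonneg, div_le_one pi_pos]
    exact arccos_le_pi x

end DescribingFunction

end

open DescribingFunction

/-- Comparison of describing-function gain and bias: for
`K(r) = (1/π)(r·√(1-r²) - arccos r) + 1` and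
`L(r) = (1/π)(√(1-r²) - r·arccos r) + r`, if `r, s ∈ [-1,1]`, `w ≥ 0`,
and `K(r) < K(s)`, then `r + w·L(r) < s + w·L(s)`. -/
theorem describing_gain_bias_comparison
    (r s w : ℝ) (hr : r ∈ Set.Icc (-1 : ℝ) 1) (hs : s ∈ Set.Icc (-1 : ℝ) 1)
    (hw : 0 ≤ w)
    (hK : (1 / π) * (r * Real.sqrt (1 - r ^ 2) - Real.arccos r) + 1 <
          (1 / π) * (s * Real.sqrt (1 - s ^ 2) - Real.arccos s) + 1) :
    r + w * ((1 / π) * (Real.sqrt (1 - r ^ 2) - r * Real.arccos r) + r) <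
      s + w * ((1 / π) * (Real.sqrt (1 - s ^ 2) - s * Real.arccos s) + s) := by
  have hrs : r < s := monotoneOn_gain.reflect_lt hr hs hK
  have hL : bias r ≤ bias s := monotoneOn_bias hr hs hrs.le
  exact add_lt_add_of_lt_of_le hrs (mul_le_mul_of_nonneg_left hL hw)
end
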